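/- Let X, U, Y be real Hilbert spaces, let H, A : X → X, B : U → X, C : X → Y, D : U → Y be bounded linear operators, let P : X → X be bounded, self-adjoint and positive semidefinite (⟨z, P z⟩ ≥ 0 for all z), and let γ > 0. Suppose the block operator inequality holds: for all u ∈ U, v ∈ Y, ξ ∈ X, −γ‖u‖² − γ‖v‖² + 2⟨v, C ξ + D u⟩ + 2⟨B u, P (H ξ)⟩ + 2⟨H ξ, P (A ξ)⟩ ≤ 0. Let u : [0, ∞) → U be continuous and x : [0, ∞) → X be differentiable with H (x'(t)) = A (x(t)) + B (u(t)) for all t ≥ 0 and H (x(0)) = 0, and set y(t) = C (x(t)) + D (u(t)). Then for every T ≥ 0, ∫_0^T ‖y(t)‖² dt ≤ γ² ∫_0^T ‖u(t)‖² dt. -/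
import Mathlib


open Set MeasureTheory
open scoped RealInnerProductSpace

/-- `L²`-gain bound for the PIE `H ẋ(t) = A x(t) + B u(t)`, `y(t) = C x(t) + D u(t)`:
if `P ≽ 0` is self-adjoint and the quadratic form of the operator LMI
`[[−γI, D*, B*PH],[D, −γI, C],[H*PB, C*, A*PH + H*PA]] ≼ 0` holds, then for zero initial
condition `H x(0) = 0` the output satisfies `∫_0^T ‖y‖² ≤ γ² ∫_0^T ‖u‖²` for all `T ≥ 0`. -/
theorem pie_l2_gain {X U Y : Type*}
    [NormedAddCommGroup X] [InnerProductSpace ℝ X] [CompleteSpace X]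
    [NormedAddCommGroup U] [InnerProductSpace ℝ U] [CompleteSpace U]
    [NormedAddCommGroup Y] [InnerProductSpace ℝ Y] [CompleteSpace Y]
    (H A : X →L[ℝ] X) (B : U →L[ℝ] X) (C : X →L[ℝ] Y) (D : U →L[ℝ] Y)
    (P : X →L[ℝ] X)
    (hP : ∀ x y : X, ⟪P x, y⟫ = ⟪x, P y⟫)
    (hPpos : ∀ z : X, 0 ≤ ⟪z, P z⟫)
    (γ : ℝ) (hγ : 0 < γ)
    (hLMI : ∀ (u : U) (v : Y) (ξ : X),
      -γ * ‖u‖ ^ 2 - γ * ‖v‖ ^ 2 + 2 * ⟪v, C ξ + D u⟫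
        + 2 * ⟪B u, P (H ξ)⟫ + 2 * ⟪H ξ, P (A ξ)⟫ ≤ 0)
    (u : ℝ → U) (hu : ContinuousOn u (Ici (0:ℝ)))
    (x x' : ℝ → X)
    (hderiv : ∀ t : ℝ, 0 ≤ t → HasDerivAt x (x' t) t)
    (hPIE : ∀ t : ℝ, 0 ≤ t → H (x' t) = A (x t) + B (u t))
    (hinit : H (x 0) = 0) :
    ∀ T : ℝ, 0 ≤ T →
      ∫ t in (0:ℝ)..T, ‖C (x t) + D (u t)‖ ^ 2
        ≤ γ ^ 2 * ∫ t in (0:ℝ)..T, ‖u t‖ ^ 2 := by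
  intro T hT
  set g : ℝ → ℝ := fun t => ⟪H (x t), P (H (x t))⟫ with hg
  set φ : ℝ → ℝ := fun t => 2 * ⟪A (x t) + B (u t), P (H (x t))⟫ with hφ
  have hxc : ContinuousOn x (Icc 0 T) := fun t ht =>
    ((hderiv t ht.1).continuousAt).continuousWithinAt
  have huc : ContinuousOn u (Icc 0 T) := hu.mono Icc_subset_Ici_self
  have hyc : ContinuousOn (fun t => C (x t) + D (u t)) (Icc 0 T) :=
    (C.continuous.comp_continuousOn hxc).add (D.continuous.comp_continuousOn huc)
  have hφc : ContinuousOn φ (Icc 0 T) := by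
    apply ContinuousOn.mul continuousOn_const
    exact ContinuousOn.inner
      ((A.continuous.comp_continuousOn hxc).add (B.continuous.comp_continuousOn huc))
      ((P.continuous.comp H.continuous).comp_continuousOn hxc)
  -- derivative of g
  have hgd : ∀ t ∈ Icc (0:ℝ) T, HasDerivAt g (φ t) t := by
    intro t ht
    have h1 : HasDerivAt (fun s => H (x s)) (H (x' t)) t :=
      H.hasFDerivAt.comp_hasDerivAt t (hderiv t ht.1)
    have h2 : HasDerivAt (fun s => P (H (x s))) (P (H (x' t))) t :=
      P.hasFDerivAt.comp_hasDerivAt t h1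
    have h3 := h1.inner ℝ h2
    have hsym : ⟪H (x t), P (H (x' t))⟫ = ⟪H (x' t), P (H (x t))⟫ := by
      rw [← hP, real_inner_comm]
    have heq : φ t = ⟪H (x t), P (H (x' t))⟫ + ⟪H (x' t), P (H (x t))⟫ := by
      simp only [hφ, hsym, ← hPIE t ht.1]
      ring
    rw [heq]
    exact h3
  -- pointwise bound
  have hbound : ∀ t ∈ Icc (0:ℝ) T,
      φ t ≤ γ * ‖u t‖ ^ 2 - (1/γ) * ‖C (x t) + D (u t)‖ ^ 2 := by
    intro t ht
    have h := hLMI (u t) ((1/γ) • (C (x t) + D (u t))) (x t)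
    have hsym : ⟪H (x t), P (A (x t))⟫ = ⟪A (x t), P (H (x t))⟫ := by
      rw [← hP, real_inner_comm]
    rw [norm_smul, real_inner_smul_left, real_inner_self_eq_norm_sq, hsym] at h
    have hne : γ ≠ 0 := ne_of_gt hγ
    have hφt : φ t = 2 * ⟪A (x t), P (H (x t))⟫ + 2 * ⟪B (u t), P (H (x t))⟫ := by
      simp only [hφ, inner_add_left]; ring
    rw [hφt]
    have habs : ‖(1/γ : ℝ)‖ = 1/γ := abs_of_pos (by positivity)
    rw [habs] at h
    have hexp : γ * (1/γ * ‖C (x t) + D (u t)‖) ^ 2 = (1/γ) * ‖C (x t) + D (u t)‖ ^ 2 := by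
      field_simp
    rw [hexp] at h
    linarith
  -- FTC
  have hint : IntervalIntegrable φ volume 0 T :=
    (hφc.mono (by rw [uIcc_of_le hT])).intervalIntegrable
  have hftc : ∫ t in (0:ℝ)..T, φ t = g T - g 0 := by
    apply intervalIntegral.integral_eq_sub_of_hasDerivAt
    · intro t ht
      exact hgd t (by rwa [uIcc_of_le hT] at ht)
    · exact hint
  have hg0 : g 0 = 0 := by simp [hg, hinit]
  have hgT : 0 ≤ g T := hPpos _
  have hintu : IntervalIntegrable (fun t => ‖u t‖ ^ 2) volume 0 T := by
    apply ContinuousOn.intervalIntegrable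
    rw [uIcc_of_le hT]
    exact (huc.norm.pow 2)
  have hinty : IntervalIntegrable (fun t => ‖C (x t) + D (u t)‖ ^ 2) volume 0 T := by
    apply ContinuousOn.intervalIntegrable
    rw [uIcc_of_le hT]
    exact (hyc.norm.pow 2)
  have hmono : ∫ t in (0:ℝ)..T, φ t ≤
      ∫ t in (0:ℝ)..T, (γ * ‖u t‖ ^ 2 - (1/γ) * ‖C (x t) + D (u t)‖ ^ 2) := by
    apply intervalIntegral.integral_mono_on hT hint
    · exact (hintu.const_mul γ).sub (hinty.const_mul (1/γ))
    · exact hbound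
  rw [hftc] at hmono
  rw [intervalIntegral.integral_sub (hintu.const_mul γ) (hinty.const_mul (1/γ)),
    intervalIntegral.integral_const_mul, intervalIntegral.integral_const_mul] at hmono
  have hne : γ ≠ 0 := ne_of_gt hγ
  have := hmono
  have key : (1/γ) * ∫ t in (0:ℝ)..T, ‖C (x t) + D (u t)‖ ^ 2 ≤
      γ * ∫ t in (0:ℝ)..T, ‖u t‖ ^ 2 := by linarith
  have := mul_le_mul_of_nonneg_left key (le_of_lt hγ)
  calc ∫ t in (0:ℝ)..T, ‖C (x t) + D (u t)‖ ^ 2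
      = γ * ((1/γ) * ∫ t in (0:ℝ)..T, ‖C (x t) + D (u t)‖ ^ 2) := by
        field_simp
    _ ≤ γ * (γ * ∫ t in (0:ℝ)..T, ‖u t‖ ^ 2) := this
    _ = γ ^ 2 * ∫ t in (0:ℝ)..T, ‖u t‖ ^ 2 := by ring
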